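/- arXiv:2304.06220 — 2 statements merged into one kernel-verified Lean document; each statement's English description precedes it below -/
import Mathlib

section
/- (MacWilliams identity for complete weight enumerators) Let C be an F_q-linear code of length n and χ a non-trivial additive character of F_q. Define cwe_C({x_a}_{a∈F_q}) := Σ_{u∈C} Π_{a∈F_q} x_a^{n_a(u)}, where n_a(u) is the number of coordinates of u equal to a. Then cwe_{C^⊥}({x_a}) = (1/|C|) · cwe_C( { Σ_{b∈F_q} χ(ab) x_b }_{a∈F_q} ), i.e. cwe of the dual code is obtained by substituting x_a ↦ Σ_b χ(ab) x_b and dividing by |C|. -/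
open Finset
open scoped Classical

noncomputable section

/-- `n_{a,X}(u) = #{ i ∈ X : u_i = a }`. -/
def count {F : Type*} {n : ℕ} (u : Fin n → F) (X : Finset (Fin n)) (a : F) : ℕ :=
  (X.filter (fun i => u i = a)).card

/-- The codewords of a linear code `C ⊆ F^n`, as a finset. -/
def codeFinset {F : Type*} [Field F] [Fintype F] {n : ℕ}
    (C : Submodule F (Fin n → F)) : Finset (Fin n → F) :=
  Finset.univ.filter (· ∈ C)

/-- The dual code `C^⊥ = {v : u·v = 0 for all u ∈ C}`, as a finset. -/
def dualFinset {F : Type*} [Field F] [Fintype F] {n : ℕ}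
    (C : Submodule F (Fin n → F)) : Finset (Fin n → F) :=
  Finset.univ.filter (fun v => ∀ u ∈ C, ∑ i, u i * v i = 0)

/-!
Writing each monomial `∏_a x_a^{n_a(u)}` as `∏_i x_{u_i}`, the substituted enumerator of `C`
expands to `∑_v (∑_{u ∈ C} χ(u·v)) ∏_i x_{v_i}`. The functional `u ↦ u·v` on `C` is either
zero, exactly when `v ∈ C^⊥`, or onto `F`; in the second case `u ↦ χ(u·v)` is a non-trivial
character of `C` and the inner sum vanishes, in the first it equals `|C|`.
-/

lemma AddChar.map_sum_eq_prod {A M ι : Type*} [AddCommMonoid A] [CommMonoid M]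
    (χ : AddChar A M) (s : Finset ι) (f : ι → A) :
    χ (∑ i ∈ s, f i) = ∏ i ∈ s, χ (f i) := by
  induction s using Finset.cons_induction with
  | empty => simp
  | cons a s ha ih => rw [sum_cons, prod_cons, χ.map_add_eq_mul, ih]

lemma AddChar.sum_comp_dual_eq_ite {F V R : Type*} [Field F] [AddCommGroup V] [Module F V]
    [Fintype V] [CommRing R] [IsDomain R] {χ : AddChar F R} (hχ : χ ≠ 1)
    (f : Module.Dual F V) :
    ∑ v, χ (f v) = if f = 0 then (Fintype.card V : R) else 0 := by
  have hψ : χ.compAddMonoidHom f.toAddMonoidHom = 0 ↔ f = 0 := by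
    refine ⟨fun h => by_contra fun hf => hχ ?_, fun hf => by ext; simp [hf]⟩
    exact compAddMonoidHom_injective_left _ (LinearMap.surjective hf) h
  exact (χ.compAddMonoidHom f.toAddMonoidHom).sum_eq_ite.trans (if_congr hψ rfl rfl)

lemma prod_pow_count_univ {F M : Type*} [Fintype F] [CommMonoid M] {n : ℕ}
    (v : Fin n → F) (f : F → M) :
    ∏ a, f a ^ count v univ a = ∏ i, f (v i) := by
  rw [← prod_fiberwise' univ v f]
  exact prod_congr rfl fun a _ => by rw [prod_const, count]

section Code

variable {F R : Type*} [Field F] [Fintype F] [CommRing R] [IsDomain R] {n : ℕ}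

lemma sum_codeFinset_addChar_dotProduct (C : Submodule F (Fin n → F)) {χ : AddChar F R}
    (hχ : χ ≠ 1) (v : Fin n → F) :
    ∑ u ∈ codeFinset C, χ (∑ i, u i * v i) =
      if v ∈ dualFinset C then (Nat.card C : R) else 0 := by
  let f : Module.Dual F C := (dotProductBilin F F).flip v ∘ₗ C.subtype
  have hf : f = 0 ↔ v ∈ dualFinset C := by
    simp [f, dualFinset, LinearMap.ext_iff, dotProduct]
  rw [sum_subtype (p := (· ∈ C)) _ (by simp [codeFinset]), Nat.card_eq_fintype_card]
  exact (AddChar.sum_comp_dual_eq_ite hχ f).trans (if_congr hf rfl rfl)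

lemma sum_codeFinset_prod_sum_addChar_mul (C : Submodule F (Fin n → F)) {χ : AddChar F R}
    (hχ : χ ≠ 1) (x : F → R) :
    ∑ u ∈ codeFinset C, ∏ i, ∑ b, χ (u i * b) * x b =
      Nat.card C * ∑ v ∈ dualFinset C, ∏ i, x (v i) := by
  calc ∑ u ∈ codeFinset C, ∏ i, ∑ b, χ (u i * b) * x b
      = ∑ u ∈ codeFinset C, ∑ v : Fin n → F, χ (∑ i, u i * v i) * ∏ i, x (v i) := by
        refine sum_congr rfl fun u _ => ?_
        simp only [Fintype.prod_sum, prod_mul_distrib, AddChar.map_sum_eq_prod]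
    _ = ∑ v : Fin n → F, (∑ u ∈ codeFinset C, χ (∑ i, u i * v i)) * ∏ i, x (v i) := by
        rw [sum_comm]
        simp only [sum_mul]
    _ = Nat.card C * ∑ v ∈ dualFinset C, ∏ i, x (v i) := by
        simp only [sum_codeFinset_addChar_dotProduct C hχ, ite_mul, zero_mul, mul_sum]
        rw [sum_ite_mem, univ_inter]

end Code

/-- MacWilliams identity for complete weight enumerators: for every assignment of complex
values to the variables `{x_a}_{a ∈ F_q}`,
`cwe_{C^⊥}({x_a}) = (1/|C|) · cwe_C({∑_b χ(ab) x_b}_a)`. -/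
theorem cwe_macwilliams {F : Type*} [Field F] [Fintype F] {n : ℕ}
    (C : Submodule F (Fin n → F)) (χ : AddChar F ℂ) (hχ : χ ≠ 1) (x : F → ℂ) :
    ∑ v ∈ dualFinset C, ∏ a : F, x a ^ count v Finset.univ a =
      (1 / (Nat.card C : ℂ)) *
        ∑ u ∈ codeFinset C, ∏ a : F, (∑ b : F, χ (a * b) * x b) ^ count u Finset.univ a := by
  have hC : (Nat.card C : ℂ) ≠ 0 := Nat.cast_ne_zero.2 Nat.card_pos.ne'
  simp only [prod_pow_count_univ]
  rw [sum_codeFinset_prod_sum_addChar_mul C hχ, one_div, inv_mul_cancel_left₀ hC]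
end
end

section
/- Let C be an F_q-linear code of length n, let X_1,…,X_ℓ partition {1,…,n}, and let i ∈ X_k for some k. Then the split complete Jacobi polynomial with T_k = {i} and all other T_j = ∅ decomposes as: SCJ_{C,X_1(∅),…,X_k({i}),…,X_ℓ(∅)} = x_{X_k,0} · scwe_{C/i, X_1,…,X_ℓ} + Σ_{0≠a∈F_q} x_{X_k,a} · scwe_{C+i_a, X_1,…,X_ℓ}, where C/i is the shortening of C at coordinate i, and C+i_a is the subcode of codewords whose i-th coordinate equals a, punctured at i (with the partition sets restricted/reindexed after removing coordinate i). -/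
/-!
The `x`-part of the monomial of a codeword `u` only sees the coordinate `i`, so it is
`x_{X_k, u_i}`, while its `y`-part counts `u` on the partition sets with `i` removed. Grouping
the codewords by the value of `u_i` and splitting off the fibre `u_i = 0` gives the decomposition.
-/

open Finset
open scoped Classical

noncomputable section

section Count

variable {F M : Type*} [CommMonoid M] {n : ℕ}

theorem count_empty (u : Fin n → F) (a : F) : count u ∅ a = 0 := by
  simp [count]

theorem count_singleton (u : Fin n → F) (i : Fin n) (a : F) :
    count u {i} a = if u i = a then 1 else 0 := by
  unfold count
  split_ifs with h <;> simp [filter_singleton, h]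

theorem prod_pow_count_singleton [Fintype F] (u : Fin n → F) (i : Fin n) (x : F → M) :
    ∏ a, x a ^ count u {i} a = x (u i) := by
  simp_rw [count_singleton, pow_ite, pow_one, pow_zero]
  simp

theorem prod_prod_pow_count_ite_singleton [Fintype F] {ℓ : ℕ} (u : Fin n → F) (k : Fin ℓ)
    (i : Fin n) (x : Fin ℓ → F → M) :
    ∏ j, ∏ a, x j a ^ count u (if j = k then {i} else ∅) a = x k (u i) := by
  rw [prod_eq_single k (fun j _ hj => by simp [hj, count_empty]) (by simp)]
  simpa using prod_pow_count_singleton u i (x k)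

end Count

theorem sdiff_ite_singleton_eq_erase {ι α : Type*} [DecidableEq ι] [DecidableEq α]
    (X : ι → Finset α) (hdisj : ∀ j j', j ≠ j' → Disjoint (X j) (X j')) {k : ι} {i : α}
    (hi : i ∈ X k) (j : ι) :
    X j \ (if j = k then {i} else ∅) = (X j).erase i := by
  by_cases hj : j = k
  · subst hj
    simp [sdiff_singleton_eq_erase]
  · have hij : i ∉ X j := fun h => disjoint_left.mp (hdisj j k hj) h hi
    simp [hj, erase_eq_self.mpr hij]

theorem sum_mul_eq_sum_fiberwise {ι κ R : Type*} [Fintype κ] [CommSemiring R]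
    (s : Finset ι) (f : ι → κ) (g : κ → R) (h : ι → R) :
    ∑ u ∈ s, g (f u) * h u = ∑ a, g a * ∑ u ∈ s.filter (fun u => f u = a), h u := by
  rw [← sum_fiberwise s f]
  refine sum_congr rfl fun a _ => ?_
  rw [mul_sum]
  exact sum_congr rfl fun u hu => by rw [(mem_filter.mp hu).2]

/-- The shortened code `C/i` (resp. `C+i_a`) is represented by the codewords of `C` with `u i = 0`
(resp. `u i = a`), and its partition sets by the `X j` with `i` erased rather than reindexed. -/
theorem scj_single_point_decomposition_general {F : Type*} [Field F] [Fintype F] {n ℓ : ℕ}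
    (C : Submodule F (Fin n → F)) (X : Fin ℓ → Finset (Fin n))
    (hdisj : ∀ j j', j ≠ j' → Disjoint (X j) (X j'))
    (k : Fin ℓ) (i : Fin n) (hi : i ∈ X k)
    (x y : Fin ℓ → F → ℂ) :
    ∑ u ∈ codeFinset C,
        (∏ j, ∏ a : F, x j a ^ count u (if j = k then {i} else ∅) a) *
          ∏ j, ∏ a : F, y j a ^ count u (X j \ (if j = k then {i} else ∅)) a =
      x k 0 *
          (∑ u ∈ (codeFinset C).filter (fun u => u i = 0),
            ∏ j, ∏ a' : F, y j a' ^ count u ((X j).erase i) a') +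
        ∑ a ∈ Finset.univ \ {(0 : F)}, x k a *
          ∑ u ∈ (codeFinset C).filter (fun u => u i = a),
            ∏ j, ∏ a' : F, y j a' ^ count u ((X j).erase i) a' := by
  simp_rw [prod_prod_pow_count_ite_singleton, sdiff_ite_singleton_eq_erase X hdisj hi]
  exact (sum_mul_eq_sum_fiberwise _ (fun u : Fin n → F => u i) (x k) _).trans
    (sum_eq_add_sum_sdiff_singleton_of_mem (mem_univ 0) _)

/-- Decomposition of the split complete Jacobi polynomial with `T_k = {i}` and all other
`T_j = ∅`: it equals `x_{X_k,0} · scwe(C/i) + ∑_{0 ≠ a} x_{X_k,a} · scwe(C+i_a)`, where the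
shortened code `C/i` (resp. the punctured subcode `C+i_a`) is identified with the codewords
of `C` whose `i`-th coordinate is `0` (resp. `a`), counted on the partition sets with the
coordinate `i` removed. -/
theorem scj_single_point_decomposition {F : Type*} [Field F] [Fintype F] {n ℓ : ℕ}
    (C : Submodule F (Fin n → F)) (X : Fin ℓ → Finset (Fin n))
    (hdisj : ∀ j j', j ≠ j' → Disjoint (X j) (X j'))
    (hunion : Finset.univ.biUnion X = Finset.univ)
    (k : Fin ℓ) (i : Fin n) (hi : i ∈ X k)
    (x y : Fin ℓ → F → ℂ) :
    ∑ u ∈ codeFinset C,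
        (∏ j, ∏ a : F, x j a ^ count u (if j = k then {i} else ∅) a) *
          ∏ j, ∏ a : F, y j a ^ count u (X j \ (if j = k then {i} else ∅)) a =
      x k 0 *
          (∑ u ∈ (codeFinset C).filter (fun u => u i = 0),
            ∏ j, ∏ a' : F, y j a' ^ count u ((X j).erase i) a') +
        ∑ a ∈ Finset.univ \ {(0 : F)}, x k a *
          ∑ u ∈ (codeFinset C).filter (fun u => u i = a),
            ∏ j, ∏ a' : F, y j a' ^ count u ((X j).erase i) a' :=
  scj_single_point_decomposition_general C X hdisj k i hi x y
end
end
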